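/- arXiv:2310.17296 — 4 statements merged into one kernel-verified Lean document; each statement's English description precedes it below -/
import Mathlib

section
/- For every N ≥ 1 and every word (i₁,…,i_N) ∈ {1,…,n}^N one has T_{i₁}⋯T_{i_N} S_{i_N}⋯S_{i₁} = π(1_{X_{i₁…i_N}}) on L^p_μ(X), where X_{i₁…i_N} := {x ∈ X : x₁ = i₁, …, x_N = i_N} is the cylinder set determined by the word. -/
open MeasureTheory
open scoped ENNReal

noncomputable section

/-- The Bernoulli shift space `X = {1,…,n}^ℕ`, modelled as `ℕ → Fin n`. -/
abbrev BSpace (n : ℕ) := ℕ → Fin n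

/-- The shift map `φ(x₁,x₂,x₃,…) = (x₂,x₃,…)`. -/
def shift (n : ℕ) (x : BSpace n) : BSpace n := fun k => x (k + 1)

lemma shift_continuous (n : ℕ) : Continuous (shift n) :=
  continuous_pi fun k => continuous_apply (k + 1)

/-- The shift map as a continuous map. -/
def shiftCM (n : ℕ) : C(BSpace n, BSpace n) := ⟨shift n, shift_continuous n⟩

/-- The preimage section `iy = (i, y₁, y₂, …)` of the shift. -/
def cons (n : ℕ) (i : Fin n) (x : BSpace n) : BSpace n :=
  fun k => Nat.casesOn k i fun m => x m

lemma cons_continuous (n : ℕ) (i : Fin n) : Continuous (cons n i) := by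
  apply continuous_pi
  intro k
  cases k with
  | zero => exact continuous_const
  | succ m => exact continuous_apply m

/-- The transfer (Ruelle–Perron–Frobenius) operator
`L(a)(y) = Σ_{x ∈ φ⁻¹(y)} ϱ(x) a(x) = Σ_{i=1}^n ϱ(iy) a(iy)`. -/
def transfer (n : ℕ) (ϱ : C(BSpace n, ℝ)) (a : C(BSpace n, ℂ)) : C(BSpace n, ℂ) :=
  ⟨fun y => ∑ i : Fin n, (ϱ (cons n i y) : ℂ) * a (cons n i y), by
    refine continuous_finset_sum _ fun i _ => ?_
    exact (Complex.continuous_ofReal.comp (ϱ.continuous.comp (cons_continuous n i))).mul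
      (a.continuous.comp (cons_continuous n i))⟩

lemma isClopen_cyl (n : ℕ) (i : Fin n) : IsClopen {x : BSpace n | x 0 = i} :=
  (isClopen_discrete ({i} : Set (Fin n))).preimage (continuous_apply 0)

/-- The power `ϱ^r` of the (strictly positive) potential, as a continuous map. -/
def rhoPow (n : ℕ) (ϱ : C(BSpace n, ℝ)) (hϱ : ∀ x, 0 < ϱ x) (r : ℝ) : C(BSpace n, ℝ) :=
  ⟨fun x => ϱ x ^ r, ϱ.continuous.rpow_const fun x => Or.inl (hϱ x).ne'⟩

/-- The complex-valued power `ϱ^r` of the potential, as a continuous map. -/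
def rhoPowC (n : ℕ) (ϱ : C(BSpace n, ℝ)) (hϱ : ∀ x, 0 < ϱ x) (r : ℝ) : C(BSpace n, ℂ) :=
  ⟨fun x => ((ϱ x ^ r : ℝ) : ℂ), Complex.continuous_ofReal.comp (rhoPow n ϱ hϱ r).continuous⟩

/-- The continuous function `g·1_{X_i}` (product of `g` with the indicator of the clopen
cylinder `X_i = {x : x₁ = i}`), as a complex-valued continuous map. -/
def wInd (n : ℕ) (i : Fin n) (g : C(BSpace n, ℝ)) : C(BSpace n, ℂ) :=
  ⟨fun x => if x 0 = i then (g x : ℂ) else 0, by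
    refine Continuous.if (fun x hx => ?_)
      (Complex.continuous_ofReal.comp g.continuous) continuous_const
    rw [(isClopen_cyl n i).frontier_eq] at hx
    exact absurd hx (Set.notMem_empty x)⟩

/-- The operator `T_i = π(ϱ^{-1/p}·1_{X_i}) T`. -/
def TOp {A : Type*} [Mul A] (n : ℕ) (ϱ : C(BSpace n, ℝ)) (hϱ : ∀ x, 0 < ϱ x) (p : ℝ≥0∞)
    (π : C(BSpace n, ℂ) → A) (T : A) (i : Fin n) : A :=
  π (wInd n i (rhoPow n ϱ hϱ (-(1 / p.toReal)))) * T

/-- The operator `S_i = S π(ϱ^{-1/q}·1_{X_i})`, where `1/q = 1 - 1/p`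
(with the convention `ϱ^{-1/q} = ϱ^0 = 1` when `p = 1`). -/
def SOp {A : Type*} [Mul A] (n : ℕ) (ϱ : C(BSpace n, ℝ)) (hϱ : ∀ x, 0 < ϱ x) (p : ℝ≥0∞)
    (π : C(BSpace n, ℂ) → A) (S : A) (i : Fin n) : A :=
  S * π (wInd n i (rhoPow n ϱ hϱ (-(1 - 1 / p.toReal))))

/-- The indicator of the cylinder set `X_{i₁…i_N} = {x : x₁ = i₁, …, x_N = i_N}`
determined by the word `w = (i₁,…,i_N)`, as a continuous map. -/
def cylCM (n N : ℕ) (w : Fin N → Fin n) : C(BSpace n, ℂ) :=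
  ⟨fun x => if (fun k : Fin N => x k) = w then 1 else 0, by
    have hclopen : IsClopen {x : BSpace n | (fun k : Fin N => x k) = w} :=
      (isClopen_discrete ({w} : Set (Fin N → Fin n))).preimage
        (continuous_pi fun k => continuous_apply (k : ℕ))
    refine Continuous.if (fun x hx => ?_) continuous_const continuous_const
    rw [hclopen.frontier_eq] at hx
    exact absurd hx (Set.notMem_empty x)⟩



/-! Testing `L*μ = μ` against continuous functions gives the identity of measures
`μ = Σᵢ (y ↦ iy)_*(ϱ(i·) μ)`. Because `ϱ > 0`, it makes every inverse branch `y ↦ iy` of `φ`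
non-singular, and because `Σᵢ ϱ(i·) = 1` it makes `μ` shift-invariant; so almost-everywhere
identities can be transported along `φ` and its branches. Then `S_i f = ϱ(i·)^{1/p} f(i·)`, and
`T_i` undoes this on `X_i` with the factor `ϱ^{-1/p}`, whence `T_i π(a) S_i = π(1_{X_i} · a ∘ φ)`.
As `1_{X_{i₁…i_N}} = 1_{X_{i₁}} · (1_{X_{i₂…i_N}} ∘ φ)`, induction on `N` gives the claim. -/

namespace MeasureTheory.Measure

variable {α ι : Type*} [MeasurableSpace α] [Fintype ι] {μ : Measure α} {g : ι → α → α}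
  {ρ : ι → α → ℝ≥0∞}

theorem quasiMeasurePreserving_of_eq_sum_map_withDensity (hg : ∀ i, Measurable (g i))
    (hρ : ∀ i, Measurable (ρ i)) (hρ_ne : ∀ i x, ρ i x ≠ 0)
    (h : μ = ∑ i, (μ.withDensity (ρ i)).map (g i)) (i : ι) :
    QuasiMeasurePreserving (g i) μ μ := by
  have hle : (μ.withDensity (ρ i)).map (g i) ≤ μ :=
    calc (μ.withDensity (ρ i)).map (g i) ≤ ∑ j, (μ.withDensity (ρ j)).map (g j) :=
          Finset.single_le_sum (f := fun j => (μ.withDensity (ρ j)).map (g j))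
            (fun _ _ => Measure.zero_le _) (Finset.mem_univ i)
      _ = μ := h.symm
  refine ⟨hg i, ?_⟩
  exact ((withDensity_absolutelyContinuous' (hρ i).aemeasurable (ae_of_all _ (hρ_ne i))).map
    (hg i)).trans (absolutelyContinuous_of_le hle)

theorem map_eq_self_of_eq_sum_map_withDensity {f : α → α} (hf : Measurable f)
    (hg : ∀ i, Measurable (g i)) (hρ : ∀ i, Measurable (ρ i)) (hfg : ∀ i x, f (g i x) = x)
    (hρ_sum : ∀ x, ∑ i, ρ i x = 1) (h : μ = ∑ i, (μ.withDensity (ρ i)).map (g i)) :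
    μ.map f = μ := by
  ext s hs
  have hpre : ∀ i, g i ⁻¹' (f ⁻¹' s) = s := fun i => by ext x; simp [hfg]
  calc μ.map f s = ∑ i, μ.withDensity (ρ i) s := by
        rw [map_apply hf hs]
        conv_lhs => rw [h]
        simp only [finsetSum_apply, map_apply (hg _) (hf hs), hpre]
    _ = ∫⁻ x in s, ∑ i, ρ i x ∂μ := by
        simp only [withDensity_apply _ hs, lintegral_finsetSum _ fun i _ => hρ i]
    _ = μ s := by simp [hρ_sum]

end MeasureTheory.Measure

section ShiftSpace

variable {n : ℕ}

lemma cons_apply_zero (i : Fin n) (y : BSpace n) : cons n i y 0 = i := rfl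

lemma cons_shift {i : Fin n} {x : BSpace n} (h : x 0 = i) : cons n i (shift n x) = x := by
  funext k
  cases k with
  | zero => exact h.symm
  | succ m => rfl

lemma wInd_apply (i : Fin n) (g : C(BSpace n, ℝ)) (x : BSpace n) :
    wInd n i g x = if x 0 = i then (g x : ℂ) else 0 := rfl

def indMulComp (i : Fin n) (a : C(BSpace n, ℂ)) : C(BSpace n, ℂ) :=
  ⟨fun x => if x 0 = i then a (shift n x) else 0, by
    refine Continuous.if (fun x hx => ?_) (a.continuous.comp (shift_continuous n))
      continuous_const
    rw [(isClopen_cyl n i).frontier_eq] at hx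
    exact absurd hx (Set.notMem_empty x)⟩

lemma cylCM_zero (w : Fin 0 → Fin n) : cylCM n 0 w = 1 := by
  ext x
  simp [cylCM, funext_iff]

lemma cylCM_succ {N : ℕ} (w : Fin (N + 1) → Fin n) :
    cylCM n (N + 1) w = indMulComp (w 0) (cylCM n N (Fin.tail w)) := by
  ext x
  simp only [cylCM, indMulComp, ContinuousMap.coe_mk, funext_iff, Fin.forall_fin_succ,
    Fin.val_zero, Fin.val_succ, Fin.tail, shift, ite_and]
  congr

end ShiftSpace

attribute [fun_prop] cons_continuous

section TransferInvariance

variable {n : ℕ} {ϱ : C(BSpace n, ℝ)} {μ : Measure (BSpace n)}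

theorem integral_sum_mul_cons_eq_integral
    (hμ : ∀ a : C(BSpace n, ℂ), ∫ y, transfer n ϱ a y ∂μ = ∫ y, a y ∂μ) (a : C(BSpace n, ℝ)) :
    ∫ y, ∑ i : Fin n, ϱ (cons n i y) * a (cons n i y) ∂μ = ∫ y, a y ∂μ := by
  have h := hμ ⟨fun x => (a x : ℂ), by fun_prop⟩
  simp only [transfer, ContinuousMap.coe_mk, ← Complex.ofReal_mul, ← Complex.ofReal_sum] at h
  exact_mod_cast h

theorem eq_sum_map_withDensity_cons [IsFiniteMeasure μ] (hϱpos : ∀ x, 0 < ϱ x)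
    (hμ : ∀ a : C(BSpace n, ℂ), ∫ y, transfer n ϱ a y ∂μ = ∫ y, a y ∂μ) :
    μ = ∑ i : Fin n,
      (μ.withDensity fun y => ENNReal.ofReal (ϱ (cons n i y))).map (cons n i) := by
  refine ext_of_forall_lintegral_eq_of_IsFiniteMeasure fun f => ?_
  let a : C(BSpace n, ℝ) := ⟨fun x => (f x : ℝ), by fun_prop⟩
  have hint : ∀ b : C(BSpace n, ℝ), Integrable b μ := fun b =>
    b.continuous.integrable_of_hasCompactSupport (HasCompactSupport.of_compactSpace _)
  have hLa_nonneg : ∀ y, 0 ≤ ∑ i : Fin n, ϱ (cons n i y) * a (cons n i y) := fun y =>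
    Finset.sum_nonneg fun i _ => mul_nonneg (hϱpos _).le (f _).coe_nonneg
  have hLa : Integrable (fun y => ∑ i : Fin n, ϱ (cons n i y) * a (cons n i y)) μ :=
    integrable_finsetSum _ fun i _ => hint ((ϱ.comp ⟨cons n i, cons_continuous n i⟩) *
      (a.comp ⟨cons n i, cons_continuous n i⟩))
  calc ∫⁻ x, f x ∂μ = ENNReal.ofReal (∫ y, a y ∂μ) :=
        lintegral_coe_eq_integral _ (hint a)
    _ = ∫⁻ y, ENNReal.ofReal (∑ i : Fin n, ϱ (cons n i y) * a (cons n i y)) ∂μ := by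
        rw [← integral_sum_mul_cons_eq_integral hμ a,
          ofReal_integral_eq_lintegral_ofReal hLa (ae_of_all _ hLa_nonneg)]
    _ = ∑ i : Fin n, ∫⁻ y, ENNReal.ofReal (ϱ (cons n i y)) * f (cons n i y) ∂μ := by
        rw [← lintegral_finsetSum _ fun i _ => by fun_prop]
        refine lintegral_congr fun y => ?_
        simp only [a, ContinuousMap.coe_mk]
        rw [ENNReal.ofReal_sum_of_nonneg fun i _ => mul_nonneg (hϱpos _).le (f _).coe_nonneg]
        simp [ENNReal.ofReal_mul (hϱpos _).le]
    _ = _ := by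
        rw [lintegral_finsetSum_measure]
        refine Finset.sum_congr rfl fun i _ => ?_
        rw [lintegral_map (by fun_prop) (cons_continuous n i).measurable,
          lintegral_withDensity_eq_lintegral_mul _ (by fun_prop) (by fun_prop)]
        rfl

theorem quasiMeasurePreserving_cons [IsFiniteMeasure μ] (hϱpos : ∀ x, 0 < ϱ x)
    (hμ : ∀ a : C(BSpace n, ℂ), ∫ y, transfer n ϱ a y ∂μ = ∫ y, a y ∂μ) (i : Fin n) :
    Measure.QuasiMeasurePreserving (cons n i) μ μ :=
  Measure.quasiMeasurePreserving_of_eq_sum_map_withDensity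
    (fun j => (cons_continuous n j).measurable) (fun j => by fun_prop)
    (fun j y => (ENNReal.ofReal_pos.2 (hϱpos _)).ne') (eq_sum_map_withDensity_cons hϱpos hμ) i

theorem measurePreserving_shift [IsFiniteMeasure μ] (hϱpos : ∀ x, 0 < ϱ x)
    (hϱsum : ∀ y : BSpace n, ∑ i : Fin n, ϱ (cons n i y) = 1)
    (hμ : ∀ a : C(BSpace n, ℂ), ∫ y, transfer n ϱ a y ∂μ = ∫ y, a y ∂μ) :
    MeasurePreserving (shift n) μ μ := by
  refine ⟨(shift_continuous n).measurable, ?_⟩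
  refine Measure.map_eq_self_of_eq_sum_map_withDensity (shift_continuous n).measurable
    (fun j => (cons_continuous n j).measurable) (fun j => by fun_prop) (fun _ _ => rfl)
    (fun y => ?_) (eq_sum_map_withDensity_cons hϱpos hμ)
  rw [← ENNReal.ofReal_sum_of_nonneg fun i _ => (hϱpos _).le, hϱsum, ENNReal.ofReal_one]

end TransferInvariance

section Operators

variable {n : ℕ} {ϱ : C(BSpace n, ℝ)} {μ : Measure (BSpace n)} {p : ℝ≥0∞} [Fact (1 ≤ p)]
  {Tφ Sφ : Lp ℂ p μ →L[ℂ] Lp ℂ p μ} {π : C(BSpace n, ℂ) → Lp ℂ p μ →L[ℂ] Lp ℂ p μ}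

theorem tOp_apply_ae (hϱpos : ∀ x, 0 < ϱ x)
    (hTφ : ∀ f : Lp ℂ p μ, (Tφ f : BSpace n → ℂ) =ᵐ[μ] fun x => f (shift n x))
    (hπ : ∀ (a : C(BSpace n, ℂ)) (f : Lp ℂ p μ),
      (π a f : BSpace n → ℂ) =ᵐ[μ] fun x => a x * f x)
    (i : Fin n) (f : Lp ℂ p μ) :
    (TOp n ϱ hϱpos p π Tφ i f : BSpace n → ℂ) =ᵐ[μ]
      fun x => wInd n i (rhoPow n ϱ hϱpos (-(1 / p.toReal))) x * f (shift n x) := by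
  filter_upwards [hπ (wInd n i (rhoPow n ϱ hϱpos (-(1 / p.toReal)))) (Tφ f), hTφ f]
    with x hπx hTx
  rw [TOp, mul_apply_eq_comp, hπx, hTx]

theorem sOp_apply_ae (hϱpos : ∀ x, 0 < ϱ x)
    (hcons : ∀ i, Measure.QuasiMeasurePreserving (cons n i) μ μ)
    (hSφ : ∀ f : Lp ℂ p μ,
      (Sφ f : BSpace n → ℂ) =ᵐ[μ] fun y => ∑ i : Fin n, (ϱ (cons n i y) : ℂ) * f (cons n i y))
    (hπ : ∀ (a : C(BSpace n, ℂ)) (f : Lp ℂ p μ),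
      (π a f : BSpace n → ℂ) =ᵐ[μ] fun x => a x * f x)
    (i : Fin n) (f : Lp ℂ p μ) :
    (SOp n ϱ hϱpos p π Sφ i f : BSpace n → ℂ) =ᵐ[μ]
      fun y => ((ϱ (cons n i y) ^ (1 / p.toReal) : ℝ) : ℂ) * f (cons n i y) := by
  set v := wInd n i (rhoPow n ϱ hϱpos (-(1 - 1 / p.toReal)))
  have hv : ∀ᵐ y ∂μ, ∀ j, (π v f : BSpace n → ℂ) (cons n j y) = v (cons n j y) * f (cons n j y) :=
    ae_all_iff.2 fun j => (hcons j).ae_eq_comp (hπ v f)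
  filter_upwards [hSφ (π v f), hv] with y hSy hvy
  have hρ : ϱ (cons n i y) * ϱ (cons n i y) ^ (-(1 - 1 / p.toReal)) =
      ϱ (cons n i y) ^ (1 / p.toReal) := by
    rw [mul_comm, ← Real.rpow_add_one (hϱpos _).ne']
    ring_nf
  rw [SOp, mul_apply_eq_comp, hSy,
    Finset.sum_eq_single i (fun j _ hj => ?_) (by simp), hvy, ← mul_assoc]
  · simp only [v, wInd_apply, cons_apply_zero, if_pos, rhoPow, ContinuousMap.coe_mk]
    rw [← Complex.ofReal_mul, hρ]
  · rw [hvy]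
    simp [v, wInd_apply, cons_apply_zero, hj]

theorem tOp_mul_mul_sOp (hϱpos : ∀ x, 0 < ϱ x)
    (hshift : Measure.QuasiMeasurePreserving (shift n) μ μ)
    (hcons : ∀ i, Measure.QuasiMeasurePreserving (cons n i) μ μ)
    (hTφ : ∀ f : Lp ℂ p μ, (Tφ f : BSpace n → ℂ) =ᵐ[μ] fun x => f (shift n x))
    (hSφ : ∀ f : Lp ℂ p μ,
      (Sφ f : BSpace n → ℂ) =ᵐ[μ] fun y => ∑ i : Fin n, (ϱ (cons n i y) : ℂ) * f (cons n i y))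
    (hπ : ∀ (a : C(BSpace n, ℂ)) (f : Lp ℂ p μ),
      (π a f : BSpace n → ℂ) =ᵐ[μ] fun x => a x * f x)
    (i : Fin n) (a : C(BSpace n, ℂ)) :
    TOp n ϱ hϱpos p π Tφ i * π a * SOp n ϱ hϱpos p π Sφ i = π (indMulComp i a) := by
  refine ContinuousLinearMap.ext fun f => Lp.ext ?_
  have haS : (π a (SOp n ϱ hϱpos p π Sφ i f) : BSpace n → ℂ) =ᵐ[μ]
      fun y => a y * (((ϱ (cons n i y) ^ (1 / p.toReal) : ℝ) : ℂ) * f (cons n i y)) := by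
    filter_upwards [hπ a _, sOp_apply_ae hϱpos hcons hSφ hπ i f] with y hπy hSy
    rw [hπy, hSy]
  filter_upwards [tOp_apply_ae hϱpos hTφ hπ i _, hshift.ae_eq_comp haS,
    hπ (indMulComp i a) f] with x hTx hSx hπx
  simp only [mul_apply_eq_comp, Function.comp_apply] at hTx hSx ⊢
  rw [hTx, hSx, hπx]
  by_cases hx : x 0 = i
  · have hρ : ((ϱ x ^ (-(1 / p.toReal)) : ℝ) : ℂ) * ((ϱ x ^ (1 / p.toReal) : ℝ) : ℂ) = 1 := by
      rw [← Complex.ofReal_mul, ← Real.rpow_add (hϱpos x), neg_add_cancel, Real.rpow_zero,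
        Complex.ofReal_one]
    simp only [wInd_apply, indMulComp, rhoPow, ContinuousMap.coe_mk, hx, if_true, cons_shift hx]
    linear_combination (a (shift n x) * f x) * hρ
  · simp [wInd_apply, indMulComp, hx]

end Operators

theorem prod_tOp_mul_prod_sOp_reverse {n : ℕ} {ϱ : C(BSpace n, ℝ)} {p : ℝ≥0∞} {A : Type*}
    [Monoid A] {Tφ Sφ : A} {π : C(BSpace n, ℂ) → A} (hϱpos : ∀ x, 0 < ϱ x)
    (hπ_one : π 1 = 1)
    (hstep : ∀ (i : Fin n) (a : C(BSpace n, ℂ)),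
      TOp n ϱ hϱpos p π Tφ i * π a * SOp n ϱ hϱpos p π Sφ i = π (indMulComp i a)) :
    ∀ (N : ℕ) (w : Fin N → Fin n),
      (List.ofFn fun k : Fin N => TOp n ϱ hϱpos p π Tφ (w k)).prod *
        ((List.ofFn fun k : Fin N => SOp n ϱ hϱpos p π Sφ (w k)).reverse).prod
          = π (cylCM n N w)
  | 0, w => by simp [cylCM_zero, hπ_one]
  | N + 1, w => by
    calc _ = TOp n ϱ hϱpos p π Tφ (w 0) *
            ((List.ofFn fun k : Fin N => TOp n ϱ hϱpos p π Tφ (Fin.tail w k)).prod *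
              ((List.ofFn fun k : Fin N => SOp n ϱ hϱpos p π Sφ (Fin.tail w k)).reverse).prod) *
            SOp n ϱ hϱpos p π Sφ (w 0) := by
          simp [List.ofFn_succ, Fin.tail, mul_assoc]
      _ = π (cylCM n (N + 1) w) := by
          rw [prod_tOp_mul_prod_sOp_reverse hϱpos hπ_one hstep N, hstep, cylCM_succ]

theorem stmt_4_general (n : ℕ)
    (ϱ : C(BSpace n, ℝ)) (hϱpos : ∀ x, 0 < ϱ x)
    (hϱsum : ∀ y : BSpace n, ∑ i : Fin n, ϱ (cons n i y) = 1)
    (μ : Measure (BSpace n)) [IsProbabilityMeasure μ]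
    (hμ : ∀ a : C(BSpace n, ℂ), ∫ y, transfer n ϱ a y ∂μ = ∫ y, a y ∂μ)
    (p : ℝ≥0∞) [Fact (1 ≤ p)]
    (Tφ Sφ : Lp ℂ p μ →L[ℂ] Lp ℂ p μ)
    (π : C(BSpace n, ℂ) → Lp ℂ p μ →L[ℂ] Lp ℂ p μ)
    (hTφ : ∀ f : Lp ℂ p μ, (Tφ f : BSpace n → ℂ) =ᵐ[μ] fun x => f (shift n x))
    (hSφ : ∀ f : Lp ℂ p μ,
      (Sφ f : BSpace n → ℂ) =ᵐ[μ] fun y => ∑ i : Fin n, (ϱ (cons n i y) : ℂ) * f (cons n i y))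
    (hπ : ∀ (a : C(BSpace n, ℂ)) (f : Lp ℂ p μ),
      (π a f : BSpace n → ℂ) =ᵐ[μ] fun x => a x * f x) :
    ∀ (N : ℕ), 1 ≤ N → ∀ w : Fin N → Fin n,
      (List.ofFn fun k : Fin N => TOp n ϱ hϱpos p π Tφ (w k)).prod *
        ((List.ofFn fun k : Fin N => SOp n ϱ hϱpos p π Sφ (w k)).reverse).prod
          = π (cylCM n N w) := by
  have hπ_one : π 1 = 1 := ContinuousLinearMap.ext fun f => Lp.ext <| by
    filter_upwards [hπ 1 f] with x hx
    simp [hx]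
  have hshift := (measurePreserving_shift hϱpos hϱsum hμ).quasiMeasurePreserving
  have hcons := quasiMeasurePreserving_cons hϱpos hμ
  intro N _ w
  exact prod_tOp_mul_prod_sOp_reverse hϱpos hπ_one
    (tOp_mul_mul_sOp hϱpos hshift hcons hTφ hSφ hπ) N w

/-- For every `N ≥ 1` and every word `(i₁,…,i_N) ∈ {1,…,n}^N` one has
`T_{i₁}⋯T_{i_N} S_{i_N}⋯S_{i₁} = π(1_{X_{i₁…i_N}})` on `L^p_μ(X)`, where
`X_{i₁…i_N} = {x ∈ X : x₁ = i₁, …, x_N = i_N}` is the cylinder set determined by the word. -/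
theorem stmt_4 (n : ℕ) (hn : 2 ≤ n)
    (ϱ : C(BSpace n, ℝ)) (hϱpos : ∀ x, 0 < ϱ x)
    (hϱsum : ∀ y : BSpace n, ∑ i : Fin n, ϱ (cons n i y) = 1)
    (μ : Measure (BSpace n)) [IsProbabilityMeasure μ]
    (hμ : ∀ a : C(BSpace n, ℂ), ∫ y, transfer n ϱ a y ∂μ = ∫ y, a y ∂μ)
    (p : ℝ≥0∞) [Fact (1 ≤ p)] (hp : p ≠ ∞)
    (Tφ Sφ : Lp ℂ p μ →L[ℂ] Lp ℂ p μ)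
    (π : C(BSpace n, ℂ) → Lp ℂ p μ →L[ℂ] Lp ℂ p μ)
    (hTφ : ∀ f : Lp ℂ p μ, (Tφ f : BSpace n → ℂ) =ᵐ[μ] fun x => f (shift n x))
    (hSφ : ∀ f : Lp ℂ p μ,
      (Sφ f : BSpace n → ℂ) =ᵐ[μ] fun y => ∑ i : Fin n, (ϱ (cons n i y) : ℂ) * f (cons n i y))
    (hπ : ∀ (a : C(BSpace n, ℂ)) (f : Lp ℂ p μ),
      (π a f : BSpace n → ℂ) =ᵐ[μ] fun x => a x * f x) :
    ∀ (N : ℕ), 1 ≤ N → ∀ w : Fin N → Fin n,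
      (List.ofFn fun k : Fin N => TOp n ϱ hϱpos p π Tφ (w k)).prod *
        ((List.ofFn fun k : Fin N => SOp n ϱ hϱpos p π Sφ (w k)).reverse).prod
          = π (cylCM n N w) :=
  stmt_4_general n ϱ hϱpos hϱsum μ hμ p Tφ Sφ π hTφ hSφ hπ
end
end

section
/- Let (π,T,S) be a covariant representation of L on L^p_ν(Ω). Then for every i = 1,…,n one has S_i T_i = 1 and T_i S_i = π(1_{X_i}); consequently each T_i is an isometry of L^p_ν(Ω). -/
open MeasureTheory
open scoped ENNReal

noncomputable section

/-! Since `ϱ^{-1/q} ϱ^{-1/p} = ϱ^{-1}` and `L(ϱ^{-1} 1_{X_i}) = 1`, covariance gives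
`S_i T_i = S π(ϱ^{-1} 1_{X_i}) T = π(1) = 1`. Multiplying `Σ_j T_j S_j = 1` on the left by
`π(1_{X_i})`, which fixes `T_i` and kills `T_j` for `j ≠ i`, gives `T_i S_i = π(1_{X_i})`.
Finally `T_i` is a contraction with a contractive left inverse `S_i`, hence an isometry. -/

theorem norm_apply_eq_of_leftInverse {𝕜 E F : Type*} [NontriviallyNormedField 𝕜]
    [SeminormedAddCommGroup E] [SeminormedAddCommGroup F] [NormedSpace 𝕜 E] [NormedSpace 𝕜 F]
    {A : E →L[𝕜] F} {B : F →L[𝕜] E} (hA : ‖A‖ ≤ 1) (hB : ‖B‖ ≤ 1)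
    (hBA : Function.LeftInverse B A) (x : E) : ‖A x‖ = ‖x‖ := by
  refine le_antisymm ((A.le_of_opNorm_le hA x).trans_eq (one_mul _)) ?_
  calc ‖x‖ = ‖B (A x)‖ := by rw [hBA x]
    _ ≤ 1 * ‖A x‖ := B.le_of_opNorm_le hB _
    _ = ‖A x‖ := one_mul _

theorem mul_eq_of_sum_mul_eq_one {ι R : Type*} [Fintype ι] [DecidableEq ι] [Semiring R]
    {t s : ι → R} {e : R} {i : ι} (hsum : ∑ j, t j * s j = 1)
    (he : ∀ j, e * t j = if j = i then t j else 0) : t i * s i = e := by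
  calc t i * s i = ∑ j, (if j = i then t j else 0) * s j := by simp
    _ = e * ∑ j, t j * s j := by simp only [Finset.mul_sum, ← mul_assoc, he]
    _ = e := by rw [hsum, mul_one]

section Cylinder

variable {n : ℕ} {ϱ : C(BSpace n, ℝ)} (hϱ : ∀ x, 0 < ϱ x)

theorem wInd_rhoPow_mul_wInd_rhoPow (a b : ℝ) (i : Fin n) :
    wInd n i (rhoPow n ϱ hϱ a) * wInd n i (rhoPow n ϱ hϱ b)
      = wInd n i (rhoPow n ϱ hϱ (a + b)) := by
  ext x
  simp only [ContinuousMap.mul_apply, wInd, rhoPow, ContinuousMap.coe_mk]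
  split_ifs
  · rw [← Complex.ofReal_mul, ← Real.rpow_add (hϱ x)]
  · simp

theorem transfer_wInd_rhoPow_neg_one (i : Fin n) :
    transfer n ϱ (wInd n i (rhoPow n ϱ hϱ (-1))) = 1 := by
  ext y
  have hcons (j : Fin n) : cons n j y 0 = j := rfl
  simp only [transfer, wInd, rhoPow, ContinuousMap.coe_mk, ContinuousMap.one_apply, hcons,
    mul_ite, mul_zero, Finset.sum_ite_eq', Finset.mem_univ, if_true]
  rw [Real.rpow_neg_one, ← Complex.ofReal_mul, mul_inv_cancel₀ (hϱ _).ne', Complex.ofReal_one]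

theorem wInd_one_mul_wInd (i j : Fin n) (g : C(BSpace n, ℝ)) :
    wInd n i 1 * wInd n j g = if j = i then wInd n j g else 0 := by
  ext x
  split_ifs with hji
  · subst hji
    by_cases hx : x 0 = j <;> simp [wInd, hx]
  · by_cases hx : x 0 = j
    · simp [wInd, hx, hji]
    · simp [wInd, hx]

end Cylinder

section Covariant

variable {n : ℕ} {ϱ : C(BSpace n, ℝ)} (hϱ : ∀ x, 0 < ϱ x) (p : ℝ≥0∞)
  {A : Type*} [Ring A] [Algebra ℂ A] (π : C(BSpace n, ℂ) →ₐ[ℂ] A)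

theorem SOp_mul_TOp {T S : A} (hcov : ∀ a, S * π a * T = π (transfer n ϱ a)) (i : Fin n) :
    SOp n ϱ hϱ p (fun a => π a) S i * TOp n ϱ hϱ p (fun a => π a) T i = 1 := by
  have hexp : -(1 - 1 / p.toReal) + -(1 / p.toReal) = -1 := by ring
  calc SOp n ϱ hϱ p (fun a => π a) S i * TOp n ϱ hϱ p (fun a => π a) T i
      = S * π (wInd n i (rhoPow n ϱ hϱ (-(1 - 1 / p.toReal)))
          * wInd n i (rhoPow n ϱ hϱ (-(1 / p.toReal)))) * T := by
        simp only [SOp, TOp, map_mul, mul_assoc]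
    _ = 1 := by
        rw [wInd_rhoPow_mul_wInd_rhoPow, hexp, hcov, transfer_wInd_rhoPow_neg_one, map_one]

theorem wInd_one_mul_TOp (T : A) (i j : Fin n) :
    π (wInd n i 1) * TOp n ϱ hϱ p (fun a => π a) T j
      = if j = i then TOp n ϱ hϱ p (fun a => π a) T j else 0 := by
  rw [TOp, ← mul_assoc, ← map_mul, wInd_one_mul_wInd]
  split_ifs <;> simp

theorem TOp_mul_SOp {T S : A}
    (hsum : ∑ j, TOp n ϱ hϱ p (fun a => π a) T j * SOp n ϱ hϱ p (fun a => π a) S j = 1)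
    (i : Fin n) :
    TOp n ϱ hϱ p (fun a => π a) T i * SOp n ϱ hϱ p (fun a => π a) S i = π (wInd n i 1) := by
  classical
  exact mul_eq_of_sum_mul_eq_one hsum (wInd_one_mul_TOp hϱ p π T i)

end Covariant

theorem stmt_6_general (n : ℕ)
    (ϱ : C(BSpace n, ℝ)) (hϱpos : ∀ x, 0 < ϱ x)
    {Ω : Type*} [MeasurableSpace Ω] (ν : Measure Ω)
    (p : ℝ≥0∞) [Fact (1 ≤ p)]
    (π : C(BSpace n, ℂ) →ₐ[ℂ] (Lp ℂ p ν →L[ℂ] Lp ℂ p ν))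
    (T S : Lp ℂ p ν →L[ℂ] Lp ℂ p ν)
    (hcov1 : ∀ a : C(BSpace n, ℂ), S * π a * T = π (transfer n ϱ a))
    (hTi : ∀ i : Fin n, ‖TOp n ϱ hϱpos p (fun a => π a) T i‖ ≤ 1)
    (hSi : ∀ i : Fin n, ‖SOp n ϱ hϱpos p (fun a => π a) S i‖ ≤ 1)
    (hsum : ∑ i : Fin n,
      TOp n ϱ hϱpos p (fun a => π a) T i * SOp n ϱ hϱpos p (fun a => π a) S i = 1)
    (i : Fin n) :
    SOp n ϱ hϱpos p (fun a => π a) S i * TOp n ϱ hϱpos p (fun a => π a) T i = 1 ∧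
    TOp n ϱ hϱpos p (fun a => π a) T i * SOp n ϱ hϱpos p (fun a => π a) S i = π (wInd n i 1) ∧
    ∀ f : Lp ℂ p ν, ‖TOp n ϱ hϱpos p (fun a => π a) T i f‖ = ‖f‖ := by
  have hST := SOp_mul_TOp hϱpos p π hcov1 i
  refine ⟨hST, TOp_mul_SOp hϱpos p π hsum i, norm_apply_eq_of_leftInverse (hTi i) (hSi i) ?_⟩
  intro f
  simpa using congr($hST f)

/-- For a covariant representation `(π,T,S)` of `L` on `L^p_ν(Ω)`:
for every `i = 1,…,n` one has `S_i T_i = 1` and `T_i S_i = π(1_{X_i})`;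
consequently each `T_i` is an isometry of `L^p_ν(Ω)`. -/
theorem stmt_6 (n : ℕ) (hn : 2 ≤ n)
    (ϱ : C(BSpace n, ℝ)) (hϱpos : ∀ x, 0 < ϱ x)
    (hϱsum : ∀ y : BSpace n, ∑ i : Fin n, ϱ (cons n i y) = 1)
    {Ω : Type*} [MeasurableSpace Ω] (ν : Measure Ω)
    (p : ℝ≥0∞) [Fact (1 ≤ p)] (hp : p ≠ ∞)
    (π : C(BSpace n, ℂ) →ₐ[ℂ] (Lp ℂ p ν →L[ℂ] Lp ℂ p ν))
    (T S : Lp ℂ p ν →L[ℂ] Lp ℂ p ν)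
    (hπcontr : ∀ a : C(BSpace n, ℂ), ‖π a‖ ≤ ‖a‖)
    (hT : ‖T‖ ≤ 1) (hS : ‖S‖ ≤ 1)
    (hcov1 : ∀ a : C(BSpace n, ℂ), S * π a * T = π (transfer n ϱ a))
    (hcov2 : ∀ a : C(BSpace n, ℂ), T * π a = π (a.comp (shiftCM n)) * T)
    (hTi : ∀ i : Fin n, ‖TOp n ϱ hϱpos p (fun a => π a) T i‖ ≤ 1)
    (hSi : ∀ i : Fin n, ‖SOp n ϱ hϱpos p (fun a => π a) S i‖ ≤ 1)
    (hsum : ∑ i : Fin n,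
      TOp n ϱ hϱpos p (fun a => π a) T i * SOp n ϱ hϱpos p (fun a => π a) S i = 1)
    (i : Fin n) :
    SOp n ϱ hϱpos p (fun a => π a) S i * TOp n ϱ hϱpos p (fun a => π a) T i = 1 ∧
    TOp n ϱ hϱpos p (fun a => π a) T i * SOp n ϱ hϱpos p (fun a => π a) S i = π (wInd n i 1) ∧
    ∀ f : Lp ℂ p ν, ‖TOp n ϱ hϱpos p (fun a => π a) T i f‖ = ‖f‖ :=
  stmt_6_general n ϱ hϱpos ν p π T S hcov1 hTi hSi hsum i

end
end

section
/- Let w ∈ C(X) with w ≥ 0. Then the spectral radius of the weighted composition operator π(w)T_φ : g ↦ w·(g∘φ) acting on L¹_μ(X) equals the spectral radius of the weighted transfer operator L_w : C(X) → C(X), L_w(b) := L(w·b), acting on the Banach space C(X) with the supremum norm: r_{B(L¹_μ(X))}(π(w)T_φ) = r_{B(C(X))}(L_w). -/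
/-!
Write `A_N := L_w^N 1 ≥ 0`, computed by the real weighted transfer operator `a ↦ L(w a)`.
Since `L_w` is positive, `|L_w^N b| ≤ A_N ‖b‖` pointwise with equality at `b = 1`, so
`‖L_w^N‖ = ‖A_N‖_∞`. On the `L¹` side, `L*μ = μ` says that the shift pushes `a μ` forward to
`L(a) μ` (two finite measures agreeing on continuous functions coincide), which yields
`∫ a |B^N f| dμ = ∫ (L_w^N a) |f| dμ` and hence `‖B^N f‖₁ = ∫ A_N |f| dμ`. As `ϱ` is bounded
below, the same identity gives every cylinder, hence every nonempty open set, positive measure;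
testing on indicators of `{A_N > c}` then shows `‖B^N‖ = ‖A_N‖_∞`. The spectral radii agree by
Gelfand's formula.
-/


open MeasureTheory
open scoped ENNReal

noncomputable section

theorem spectralRadius_eq_of_forall_norm_pow_eq {A B : Type*} [NormedRing A] [NormedAlgebra ℂ A]
    [CompleteSpace A] [NormedRing B] [NormedAlgebra ℂ B] [CompleteSpace B] {a : A} {b : B}
    (h : ∀ N : ℕ, ‖a ^ N‖ = ‖b ^ N‖) : spectralRadius ℂ a = spectralRadius ℂ b := by
  have h' : (fun N : ℕ => (‖a ^ N‖₊ : ℝ≥0∞) ^ (1 / N : ℝ))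
      = fun N : ℕ => (‖b ^ N‖₊ : ℝ≥0∞) ^ (1 / N : ℝ) := by
    funext N
    rw [show ‖a ^ N‖₊ = ‖b ^ N‖₊ from NNReal.eq (h N)]
  exact tendsto_nhds_unique (h' ▸ spectrum.pow_nnnorm_pow_one_div_tendsto_nhds_spectralRadius a)
    (spectrum.pow_nnnorm_pow_one_div_tendsto_nhds_spectralRadius b)

theorem ContinuousLinearMap.norm_eq_of_norm_apply_eq_integral_mul_norm {X 𝕜 : Type*}
    [TopologicalSpace X] [CompactSpace X] [MeasurableSpace X] [OpensMeasurableSpace X]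
    [RCLike 𝕜] {μ : Measure X} [IsFiniteMeasure μ] [μ.IsOpenPosMeasure]
    {A : C(X, ℝ)} (hA : ∀ x, 0 ≤ A x) {T : Lp 𝕜 1 μ →L[𝕜] Lp 𝕜 1 μ}
    (hT : ∀ f, ‖T f‖ = ∫ x, A x * ‖f x‖ ∂μ) : ‖T‖ = ‖A‖ := by
  have hAint : Integrable A μ := A.continuous.integrable_of_hasCompactSupport (.of_compactSpace _)
  refine le_antisymm (T.opNorm_le_bound (norm_nonneg _) fun f => ?_) ?_
  · rw [hT, L1.norm_eq_integral_norm, ← integral_const_mul]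
    refine integral_mono_of_nonneg (.of_forall fun x => mul_nonneg (hA x) (norm_nonneg _))
      ((L1.integrable_coeFn f).norm.const_mul _) (.of_forall fun x => ?_)
    exact mul_le_mul_of_nonneg_right ((Real.le_norm_self _).trans (A.norm_coe_le_norm x))
      (norm_nonneg _)
  refine (A.norm_le (norm_nonneg T)).2 fun x => ?_
  rw [Real.norm_of_nonneg (hA x)]
  refine forall_lt_imp_le_iff_le_of_dense.mp fun c hc => ?_
  set U := {y | c < A y}
  have hU : IsOpen U := isOpen_lt continuous_const A.continuous
  have hUpos : 0 < μ.real U :=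
    ENNReal.toReal_pos (hU.measure_ne_zero μ ⟨x, hc⟩) (measure_ne_top μ U)
  let f := indicatorConstLp 1 hU.measurableSet (measure_ne_top μ U) (1 : 𝕜)
  have hfU : f =ᵐ[μ] U.indicator fun _ => (1 : 𝕜) := indicatorConstLp_coeFn
  have hf : ‖f‖ = μ.real U := by simp [f, norm_indicatorConstLp one_ne_zero ENNReal.one_ne_top]
  have hTf : c * μ.real U ≤ ‖T f‖ :=
    calc c * μ.real U ≤ ∫ y in U, A y ∂μ :=
          setIntegral_ge_of_const_le_real hU.measurableSet (measure_ne_top μ U)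
            (fun y hy => hy.le) hAint.integrableOn
      _ = ‖T f‖ := by
          rw [hT, ← integral_indicator hU.measurableSet]
          refine integral_congr_ae (hfU.mono fun y hy => ?_)
          by_cases hyU : y ∈ U <;> simp [hy, hyU]
  exact le_of_mul_le_mul_right (hTf.trans (hf ▸ T.le_opNorm f)) hUpos

theorem ContinuousLinearMap.norm_eq_of_apply_one {X : Type*} [TopologicalSpace X]
    [CompactSpace X] {T : C(X, ℂ) →L[ℂ] C(X, ℂ)} {A : C(X, ℝ)} (hT1 : ∀ y, T 1 y = A y)
    (hT : ∀ b y, ‖T b y‖ ≤ A y * ‖b‖) : ‖T‖ = ‖A‖ := by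
  refine le_antisymm (T.opNorm_le_bound (norm_nonneg _) fun b => ?_) ?_
  · refine (ContinuousMap.norm_le _ (by positivity)).2 fun y => (hT b y).trans ?_
    exact mul_le_mul_of_nonneg_right ((Real.le_norm_self _).trans (A.norm_coe_le_norm y))
      (norm_nonneg b)
  refine (A.norm_le (norm_nonneg T)).2 fun y => ?_
  have h1 : ‖(1 : C(X, ℂ))‖ ≤ 1 := (ContinuousMap.norm_le _ zero_le_one).2 fun _ => by simp
  calc ‖A y‖ = ‖T 1 y‖ := by rw [hT1, Complex.norm_real]
    _ ≤ ‖T 1‖ := (T 1).norm_coe_le_norm y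
    _ ≤ ‖T‖ * ‖(1 : C(X, ℂ))‖ := T.le_opNorm 1
    _ ≤ ‖T‖ := mul_le_of_le_one_right (norm_nonneg T) h1

lemma shift_cons {n : ℕ} (i : Fin n) (y : BSpace n) : shift n (cons n i y) = y := rfl

def transferR (n : ℕ) (ϱ a : C(BSpace n, ℝ)) : C(BSpace n, ℝ) :=
  ⟨fun y => ∑ i : Fin n, ϱ (cons n i y) * a (cons n i y),
    continuous_finsetSum _ fun i _ =>
      (ϱ.continuous.comp (cons_continuous n i)).mul (a.continuous.comp (cons_continuous n i))⟩

@[simp]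
lemma transferR_apply {n : ℕ} (ϱ a : C(BSpace n, ℝ)) (y : BSpace n) :
    transferR n ϱ a y = ∑ i : Fin n, ϱ (cons n i y) * a (cons n i y) := rfl

lemma transferR_nonneg {n : ℕ} {ϱ a : C(BSpace n, ℝ)} (hϱ : ∀ x, 0 ≤ ϱ x) (ha : ∀ x, 0 ≤ a x)
    (y : BSpace n) : 0 ≤ transferR n ϱ a y :=
  show 0 ≤ ∑ _ : Fin n, _ from Finset.sum_nonneg fun _ _ => mul_nonneg (hϱ _) (ha _)

lemma transferR_mul_comp_shift {n : ℕ} (ϱ a f : C(BSpace n, ℝ)) :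
    transferR n ϱ (a * f.comp (shiftCM n)) = transferR n ϱ a * f := by
  ext y
  simp only [transferR_apply, ContinuousMap.mul_apply, ContinuousMap.comp_apply, Finset.sum_mul]
  exact Finset.sum_congr rfl fun i _ => by rw [← mul_assoc]; rfl

section Invariance

variable {n : ℕ} {ϱ : C(BSpace n, ℝ)} {μ : Measure (BSpace n)}

lemma integral_transferR (hμ : ∀ a : C(BSpace n, ℂ), ∫ y, transfer n ϱ a y ∂μ = ∫ y, a y ∂μ)
    (a : C(BSpace n, ℝ)) : ∫ y, transferR n ϱ a y ∂μ = ∫ y, a y ∂μ := by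
  have h := hμ ⟨fun x => (a x : ℂ), by fun_prop⟩
  simp only [transfer, ContinuousMap.coe_mk, ← Complex.ofReal_mul, ← Complex.ofReal_sum,
    integral_complex_ofReal, Complex.ofReal_inj] at h
  exact h

lemma map_shift_withDensity [IsFiniteMeasure μ] (hϱ : ∀ x, 0 ≤ ϱ x)
    (hμ : ∀ a : C(BSpace n, ℂ), ∫ y, transfer n ϱ a y ∂μ = ∫ y, a y ∂μ)
    {a : C(BSpace n, ℝ)} (ha : ∀ x, 0 ≤ a x) :
    (μ.withDensity fun x => ENNReal.ofReal (a x)).map (shift n)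
      = μ.withDensity fun y => ENNReal.ofReal (transferR n ϱ a y) := by
  have (b : C(BSpace n, ℝ)) : IsFiniteMeasure (μ.withDensity fun x => ENNReal.ofReal (b x)) :=
    isFiniteMeasure_withDensity_ofReal
      (b.continuous.integrable_of_hasCompactSupport (.of_compactSpace _)).hasFiniteIntegral
  refine ext_of_forall_integral_eq_of_IsFiniteMeasure fun f => ?_
  have hdens (b : C(BSpace n, ℝ)) (hb : ∀ x, 0 ≤ b x) (g : BSpace n → ℝ) :
      ∫ x, g x ∂μ.withDensity (fun x => ENNReal.ofReal (b x)) = ∫ x, b x * g x ∂μ := by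
    rw [integral_withDensity_eq_integral_toReal_smul (by fun_prop)
      (Filter.Eventually.of_forall fun _ => ENNReal.ofReal_lt_top)]
    simp only [ENNReal.toReal_ofReal (hb _), smul_eq_mul]
  rw [integral_map (shift_continuous n).aemeasurable f.continuous.aestronglyMeasurable,
    hdens a ha, hdens _ (transferR_nonneg hϱ ha)]
  have := integral_transferR hμ (a * f.toContinuousMap.comp (shiftCM n))
  rw [transferR_mul_comp_shift] at this
  exact this.symm

lemma lintegral_mul_comp_shift [IsFiniteMeasure μ] (hϱ : ∀ x, 0 ≤ ϱ x)
    (hμ : ∀ a : C(BSpace n, ℂ), ∫ y, transfer n ϱ a y ∂μ = ∫ y, a y ∂μ)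
    {a : C(BSpace n, ℝ)} (ha : ∀ x, 0 ≤ a x) {F : BSpace n → ℝ≥0∞} (hF : Measurable F) :
    ∫⁻ x, ENNReal.ofReal (a x) * F (shift n x) ∂μ
      = ∫⁻ y, ENNReal.ofReal (transferR n ϱ a y) * F y ∂μ := by
  calc ∫⁻ x, ENNReal.ofReal (a x) * F (shift n x) ∂μ
      = ∫⁻ x, F (shift n x) ∂μ.withDensity fun x => ENNReal.ofReal (a x) :=
        (lintegral_withDensity_eq_lintegral_mul _ (by fun_prop)
          (hF.comp (shift_continuous n).measurable)).symm
    _ = ∫⁻ y, F y ∂(μ.withDensity fun x => ENNReal.ofReal (a x)).map (shift n) :=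
        (lintegral_map hF (shift_continuous n).measurable).symm
    _ = ∫⁻ y, ENNReal.ofReal (transferR n ϱ a y) * F y ∂μ := by
        rw [map_shift_withDensity hϱ hμ ha,
          lintegral_withDensity_eq_lintegral_mul _ (by fun_prop) hF]
        rfl

lemma cylinder_succ (x : BSpace n) (K : ℕ) :
    PiNat.cylinder x (K + 1) = {y | y 0 = x 0} ∩ shift n ⁻¹' PiNat.cylinder (shift n x) K := by
  ext y
  simp only [PiNat.mem_cylinder_iff, Set.mem_inter_iff, Set.mem_ofPred_eq, Set.mem_preimage,
    Nat.forall_lt_succ_left, shift]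

lemma measure_inter_preimage_shift_ge [IsFiniteMeasure μ] (hϱ : ∀ x, 0 ≤ ϱ x)
    (hμ : ∀ a : C(BSpace n, ℂ), ∫ y, transfer n ϱ a y ∂μ = ∫ y, a y ∂μ)
    {δ : ℝ} (hδ : ∀ x, δ ≤ ϱ x) (i : Fin n) {S : Set (BSpace n)} (hS : MeasurableSet S) :
    ENNReal.ofReal δ * μ S ≤ μ ({y | y 0 = i} ∩ shift n ⁻¹' S) := by
  let a : C(BSpace n, ℝ) :=
    ⟨fun x => if x 0 = i then 1 else 0, (continuous_of_discreteTopology (f := fun j : Fin n =>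
      if j = i then (1 : ℝ) else 0)).comp (continuous_apply 0)⟩
  have hLa (y : BSpace n) : transferR n ϱ a y = ϱ (cons n i y) := by
    change ∑ j : Fin n, ϱ (cons n j y) * (if j = i then 1 else 0) = _
    simp
  have key := lintegral_mul_comp_shift hϱ hμ (a := a) (fun x => by dsimp [a]; split_ifs <;> simp)
    (F := S.indicator 1) (measurable_one.indicator hS)
  simp only [hLa] at key
  calc ENNReal.ofReal δ * μ S = ∫⁻ y, ENNReal.ofReal δ * S.indicator 1 y ∂μ := by
        rw [lintegral_const_mul _ (measurable_one.indicator hS), lintegral_indicator_one hS]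
    _ ≤ ∫⁻ y, ENNReal.ofReal (ϱ (cons n i y)) * S.indicator 1 y ∂μ :=
        lintegral_mono fun y => by gcongr; exact hδ _
    _ = ∫⁻ x, ({y | y 0 = i} ∩ shift n ⁻¹' S).indicator 1 x ∂μ := by
        rw [← key]
        congr 1 with x
        classical
        rw [Set.indicator_apply, Set.indicator_apply]
        by_cases hx : x 0 = i <;> simp [a, hx]
    _ = μ ({y | y 0 = i} ∩ shift n ⁻¹' S) :=
        lintegral_indicator_one ((measurableSet_eq_fun (by fun_prop) measurable_const).inter
          (hS.preimage (shift_continuous n).measurable))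

lemma isOpenPosMeasure_of_transfer_invariant [IsFiniteMeasure μ] [NeZero μ]
    (hϱpos : ∀ x, 0 < ϱ x)
    (hμ : ∀ a : C(BSpace n, ℂ), ∫ y, transfer n ϱ a y ∂μ = ∫ y, a y ∂μ) :
    μ.IsOpenPosMeasure := by
  have := μ.nonempty_of_neZero
  obtain ⟨z, hz⟩ := ϱ.continuous.exists_forall_le
    (by rw [Filter.cocompact_eq_bot]; exact Filter.tendsto_bot)
  have hcylinder (K : ℕ) : ∀ x : BSpace n, μ (PiNat.cylinder x K) ≠ 0 := by
    induction K with
    | zero => simp [NeZero.ne μ]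
    | succ K ih =>
      intro x
      rw [cylinder_succ]
      refine ne_bot_of_le_ne_bot ?_ (measure_inter_preimage_shift_ge
        (fun x => (hϱpos x).le) hμ hz (x 0) (PiNat.isOpen_cylinder _ _ _).measurableSet)
      exact mul_ne_zero (ENNReal.ofReal_pos.2 (hϱpos z)).ne' (ih _)
  refine ⟨fun U hU ⟨x, hx⟩ => ?_⟩
  obtain ⟨_, ⟨y, K, rfl⟩, -, hsub⟩ :=
    (PiNat.isTopologicalBasis_cylinders _).exists_subset_of_mem_open hx hU
  exact fun hU0 => hcylinder K y (measure_mono_null hsub hU0)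

end Invariance

def weightedTransfer (n : ℕ) (ϱ w a : C(BSpace n, ℝ)) : C(BSpace n, ℝ) := transferR n ϱ (w * a)

lemma weightedTransfer_iterate_nonneg {n : ℕ} {ϱ w a : C(BSpace n, ℝ)} (hϱ : ∀ x, 0 ≤ ϱ x)
    (hw : ∀ x, 0 ≤ w x) (ha : ∀ x, 0 ≤ a x) (N : ℕ) (y : BSpace n) :
    0 ≤ (weightedTransfer n ϱ w)^[N] a y := by
  induction N generalizing y with
  | zero => exact ha y
  | succ N ih =>
    rw [Function.iterate_succ_apply']
    exact transferR_nonneg hϱ (fun x => mul_nonneg (hw x) (ih x)) y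

namespace WeightedComposition

variable {n : ℕ} {ϱ w : C(BSpace n, ℝ)} {μ : Measure (BSpace n)} [IsFiniteMeasure μ]
  {B : Lp ℂ 1 μ →L[ℂ] Lp ℂ 1 μ}

lemma lintegral_mul_enorm_apply (hϱ : ∀ x, 0 ≤ ϱ x)
    (hμ : ∀ a : C(BSpace n, ℂ), ∫ y, transfer n ϱ a y ∂μ = ∫ y, a y ∂μ) (hw : ∀ x, 0 ≤ w x)
    (hB : ∀ g : Lp ℂ 1 μ, (B g : BSpace n → ℂ) =ᵐ[μ] fun x => (w x : ℂ) * g (shift n x))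
    {a : C(BSpace n, ℝ)} (ha : ∀ x, 0 ≤ a x) (f : Lp ℂ 1 μ) :
    ∫⁻ x, ENNReal.ofReal (a x) * ‖B f x‖ₑ ∂μ
      = ∫⁻ y, ENNReal.ofReal (weightedTransfer n ϱ w a y) * ‖f y‖ₑ ∂μ := by
  calc ∫⁻ x, ENNReal.ofReal (a x) * ‖B f x‖ₑ ∂μ
      = ∫⁻ x, ENNReal.ofReal ((w * a) x) * ‖f (shift n x)‖ₑ ∂μ := by
        refine lintegral_congr_ae ((hB f).mono fun x hx => ?_)
        simp only at hx ⊢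
        rw [hx, enorm_mul, ← ofReal_norm, Complex.norm_of_nonneg (hw x),
          ContinuousMap.mul_apply, ENNReal.ofReal_mul (hw x)]
        ring
    _ = _ := lintegral_mul_comp_shift hϱ hμ (fun x => mul_nonneg (hw x) (ha x))
        (Lp.stronglyMeasurable f).measurable.enorm

lemma lintegral_mul_enorm_pow_apply (hϱ : ∀ x, 0 ≤ ϱ x)
    (hμ : ∀ a : C(BSpace n, ℂ), ∫ y, transfer n ϱ a y ∂μ = ∫ y, a y ∂μ) (hw : ∀ x, 0 ≤ w x)
    (hB : ∀ g : Lp ℂ 1 μ, (B g : BSpace n → ℂ) =ᵐ[μ] fun x => (w x : ℂ) * g (shift n x))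
    {a : C(BSpace n, ℝ)} (ha : ∀ x, 0 ≤ a x) (N : ℕ) (f : Lp ℂ 1 μ) :
    ∫⁻ x, ENNReal.ofReal (a x) * ‖(B ^ N) f x‖ₑ ∂μ
      = ∫⁻ y, ENNReal.ofReal ((weightedTransfer n ϱ w)^[N] a y) * ‖f y‖ₑ ∂μ := by
  induction N generalizing f with
  | zero => rfl
  | succ N ih =>
    rw [pow_succ, mul_apply_eq_comp, ih, lintegral_mul_enorm_apply hϱ hμ hw hB
      (weightedTransfer_iterate_nonneg hϱ hw ha N), Function.iterate_succ_apply']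

lemma norm_pow_apply (hϱ : ∀ x, 0 ≤ ϱ x)
    (hμ : ∀ a : C(BSpace n, ℂ), ∫ y, transfer n ϱ a y ∂μ = ∫ y, a y ∂μ) (hw : ∀ x, 0 ≤ w x)
    (hB : ∀ g : Lp ℂ 1 μ, (B g : BSpace n → ℂ) =ᵐ[μ] fun x => (w x : ℂ) * g (shift n x))
    (N : ℕ) (f : Lp ℂ 1 μ) :
    ‖(B ^ N) f‖ = ∫ x, (weightedTransfer n ϱ w)^[N] 1 x * ‖f x‖ ∂μ := by
  have hA := weightedTransfer_iterate_nonneg (a := 1) hϱ hw (fun _ => zero_le_one) N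
  have h := lintegral_mul_enorm_pow_apply (a := 1) hϱ hμ hw hB (fun _ => zero_le_one) N f
  simp only [ContinuousMap.one_apply, ENNReal.ofReal_one, one_mul] at h
  rw [Lp.norm_def, eLpNorm_one_eq_lintegral_enorm, h, integral_eq_lintegral_of_nonneg_ae
    (.of_forall fun x => mul_nonneg (hA x) (norm_nonneg _)) (by fun_prop)]
  refine congrArg ENNReal.toReal (lintegral_congr fun x => ?_)
  rw [ENNReal.ofReal_mul (hA x), ofReal_norm]

end WeightedComposition

namespace WeightedTransferOp

variable {n : ℕ} {ϱ w : C(BSpace n, ℝ)} {LW : C(BSpace n, ℂ) →L[ℂ] C(BSpace n, ℂ)}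

lemma pow_apply_one (hLW : ∀ (b : C(BSpace n, ℂ)) (y : BSpace n),
      LW b y = ∑ i : Fin n, (ϱ (cons n i y) : ℂ) * (w (cons n i y) : ℂ) * b (cons n i y))
    (N : ℕ) (y : BSpace n) : (LW ^ N) 1 y = ((weightedTransfer n ϱ w)^[N] 1 y : ℂ) := by
  induction N generalizing y with
  | zero => simp
  | succ N ih =>
    rw [pow_succ', mul_apply_eq_comp, hLW, Function.iterate_succ_apply']
    simp only [ih, weightedTransfer, transferR_apply, ContinuousMap.mul_apply]
    push_cast
    exact Finset.sum_congr rfl fun i _ => by ring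

lemma norm_pow_apply_le (hϱ : ∀ x, 0 ≤ ϱ x) (hw : ∀ x, 0 ≤ w x)
    (hLW : ∀ (b : C(BSpace n, ℂ)) (y : BSpace n),
      LW b y = ∑ i : Fin n, (ϱ (cons n i y) : ℂ) * (w (cons n i y) : ℂ) * b (cons n i y))
    (N : ℕ) (b : C(BSpace n, ℂ)) (y : BSpace n) :
    ‖(LW ^ N) b y‖ ≤ (weightedTransfer n ϱ w)^[N] 1 y * ‖b‖ := by
  induction N generalizing y with
  | zero => simpa using b.norm_coe_le_norm y
  | succ N ih =>
    rw [pow_succ', mul_apply_eq_comp, hLW, Function.iterate_succ_apply']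
    refine (norm_sum_le _ _).trans ?_
    simp only [weightedTransfer, transferR_apply, ContinuousMap.mul_apply, Finset.sum_mul]
    refine Finset.sum_le_sum fun i _ => ?_
    rw [norm_mul, norm_mul, Complex.norm_of_nonneg (hϱ _), Complex.norm_of_nonneg (hw _),
      mul_assoc, mul_assoc, mul_assoc]
    exact mul_le_mul_of_nonneg_left (mul_le_mul_of_nonneg_left (ih _) (hw _)) (hϱ _)

end WeightedTransferOp

theorem stmt_15_general (n : ℕ)
    (ϱ : C(BSpace n, ℝ)) (hϱpos : ∀ x, 0 < ϱ x)
    (μ : Measure (BSpace n)) [IsProbabilityMeasure μ]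
    (hμ : ∀ a : C(BSpace n, ℂ), ∫ y, transfer n ϱ a y ∂μ = ∫ y, a y ∂μ)
    (w : C(BSpace n, ℝ)) (hw : ∀ x, 0 ≤ w x)
    (B : Lp ℂ 1 μ →L[ℂ] Lp ℂ 1 μ)
    (hB : ∀ g : Lp ℂ 1 μ,
      (B g : BSpace n → ℂ) =ᵐ[μ] fun x => (w x : ℂ) * g (shift n x))
    (LW : C(BSpace n, ℂ) →L[ℂ] C(BSpace n, ℂ))
    (hLW : ∀ (b : C(BSpace n, ℂ)) (y : BSpace n),
      LW b y = ∑ i : Fin n, (ϱ (cons n i y) : ℂ) * (w (cons n i y) : ℂ) * b (cons n i y)) :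
    spectralRadius ℂ B = spectralRadius ℂ LW := by
  have hϱ : ∀ x, 0 ≤ ϱ x := fun x => (hϱpos x).le
  have := isOpenPosMeasure_of_transfer_invariant hϱpos hμ
  have hA := weightedTransfer_iterate_nonneg (a := 1) hϱ hw (fun _ => zero_le_one)
  have hBN (N : ℕ) : ‖B ^ N‖ = ‖(weightedTransfer n ϱ w)^[N] 1‖ :=
    (B ^ N).norm_eq_of_norm_apply_eq_integral_mul_norm (hA N)
      (WeightedComposition.norm_pow_apply hϱ hμ hw hB N)
  have hLWN (N : ℕ) : ‖LW ^ N‖ = ‖(weightedTransfer n ϱ w)^[N] 1‖ :=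
    (LW ^ N).norm_eq_of_apply_one (WeightedTransferOp.pow_apply_one hLW N)
      (WeightedTransferOp.norm_pow_apply_le hϱ hw hLW N)
  -- naming `a` and `b` up front avoids a very slow unification of the algebra instances
  exact spectralRadius_eq_of_forall_norm_pow_eq (a := B) (b := LW) fun N =>
    (hBN N).trans (hLWN N).symm

/-- Let `w ∈ C(X)` with `w ≥ 0`. Then the spectral radius of the weighted
composition operator `π(w)T_φ : g ↦ w·(g∘φ)` acting on `L¹_μ(X)` equals the spectral radius
of the weighted transfer operator `L_w : C(X) → C(X)`, `L_w(b) = L(w·b)`, acting on the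
Banach space `C(X)` with the supremum norm. -/
theorem stmt_15 (n : ℕ) (hn : 2 ≤ n)
    (ϱ : C(BSpace n, ℝ)) (hϱpos : ∀ x, 0 < ϱ x)
    (hϱsum : ∀ y : BSpace n, ∑ i : Fin n, ϱ (cons n i y) = 1)
    (μ : Measure (BSpace n)) [IsProbabilityMeasure μ]
    (hμ : ∀ a : C(BSpace n, ℂ), ∫ y, transfer n ϱ a y ∂μ = ∫ y, a y ∂μ)
    (w : C(BSpace n, ℝ)) (hw : ∀ x, 0 ≤ w x)
    (B : Lp ℂ 1 μ →L[ℂ] Lp ℂ 1 μ)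
    (hB : ∀ g : Lp ℂ 1 μ,
      (B g : BSpace n → ℂ) =ᵐ[μ] fun x => (w x : ℂ) * g (shift n x))
    (LW : C(BSpace n, ℂ) →L[ℂ] C(BSpace n, ℂ))
    (hLW : ∀ (b : C(BSpace n, ℂ)) (y : BSpace n),
      LW b y = ∑ i : Fin n, (ϱ (cons n i y) : ℂ) * (w (cons n i y) : ℂ) * b (cons n i y)) :
    spectralRadius ℂ B = spectralRadius ℂ LW :=
  stmt_15_general n ϱ hϱpos μ hμ w hw B hB LW hLW

end
end

section
/- For every a ∈ C(X), the spectral radius of the weighted composition operator π(a)T_φ : f ↦ a·(f∘φ) on L^p_μ(X) is given by r(π(a)T_φ) = r_{B(C(X))}(L_{|a|^p})^{1/p}, where L_{|a|^p} : C(X) → C(X) is the weighted transfer operator L_{|a|^p}(b) := L(|a|^p·b) and r_{B(C(X))} denotes its spectral radius on C(X) with the supremum norm. -/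
/-
For continuous `G ≥ 0`, the identity `L*μ = μ` says that the shift pushes the measure `G dμ`
forward to `(L G) dμ`, i.e. `∫ G·(h∘φ) dμ = ∫ (L G)·h dμ` for all measurable `h ≥ 0`. Iterating,
`∫ |(π(a)T_φ)^k f|^p dμ = ∫ g_k |f|^p dμ` with `g_k = L_{|a|^p}^k 1`. The same identity with
`G = 1_{X_i}` shows that every cylinder has positive measure, so `μ` has full support; testing on
indicators of the open sets `{g_k > t}` then gives `‖(π(a)T_φ)^k‖ = ‖g_k‖_∞^{1/p}`. As `L_{|a|^p}`
is a positive operator, `‖L_{|a|^p}^k‖ = ‖L_{|a|^p}^k 1‖ = ‖g_k‖_∞`, and Gelfand's formula turns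
this equality of norms of powers into the equality of spectral radii.
-/

open MeasureTheory
open scoped ENNReal

noncomputable section

open scoped NNReal

def ofRealCM {X : Type*} [TopologicalSpace X] (g : C(X, ℝ)) : C(X, ℂ) :=
  ⟨fun x => g x, Complex.continuous_ofReal.comp g.continuous⟩

@[simp]
lemma ofRealCM_apply {X : Type*} [TopologicalSpace X] (g : C(X, ℝ)) (x : X) :
    ofRealCM g x = g x := rfl

lemma norm_ofRealCM {X : Type*} [TopologicalSpace X] [CompactSpace X] (g : C(X, ℝ)) :
    ‖ofRealCM g‖ = ‖g‖ := by
  simp [ContinuousMap.norm_eq_iSup_norm]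

lemma ContinuousMap.integrable {X : Type*} [TopologicalSpace X] [CompactSpace X]
    [MeasurableSpace X] [OpensMeasurableSpace X] (μ : Measure X) [IsFiniteMeasure μ]
    (g : C(X, ℝ)) : Integrable g μ :=
  (BoundedContinuousFunction.mkOfCompact g).integrable μ

lemma ContinuousMap.lintegral_ofReal {X : Type*} [TopologicalSpace X] [CompactSpace X]
    [MeasurableSpace X] [OpensMeasurableSpace X] (μ : Measure X) [IsFiniteMeasure μ]
    {g : C(X, ℝ)} (hg : ∀ x, 0 ≤ g x) :
    ∫⁻ x, ENNReal.ofReal (g x) ∂μ = ENNReal.ofReal (∫ x, g x ∂μ) :=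
  (ofReal_integral_eq_lintegral_ofReal (ContinuousMap.integrable μ g) (.of_forall hg)).symm

section LpNorm

variable {X : Type*} [MeasurableSpace X] {μ : Measure X}
  {E : Type*} [NormedAddCommGroup E] {p : ℝ≥0∞}

lemma Lp.lintegral_rpow_enorm_eq_ofReal (hp0 : p ≠ 0) (hp : p ≠ ∞) (f : Lp E p μ) :
    ∫⁻ x, ‖f x‖ₑ ^ p.toReal ∂μ = ENNReal.ofReal (‖f‖ ^ p.toReal) := by
  rw [lintegral_rpow_enorm_eq_rpow_eLpNorm' (ENNReal.toReal_pos hp0 hp),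
    ← eLpNorm_eq_eLpNorm' hp0 hp, Lp.norm_def, ENNReal.toReal_rpow,
    ENNReal.ofReal_toReal (ENNReal.rpow_ne_top_of_nonneg ENNReal.toReal_nonneg
      (Lp.eLpNorm_ne_top f))]

variable [TopologicalSpace X] [CompactSpace X] {𝕜 : Type*} [NontriviallyNormedField 𝕜]
  [NormedSpace 𝕜 E] [Fact (1 ≤ p)] {B : Lp E p μ →L[𝕜] Lp E p μ} {g : C(X, ℝ)}

lemma opNorm_rpow_le_of_lintegral_rpow_eq (hp : p ≠ ∞)
    (hB : ∀ f, ∫⁻ x, ‖B f x‖ₑ ^ p.toReal ∂μ = ∫⁻ x, ENNReal.ofReal (g x) * ‖f x‖ₑ ^ p.toReal ∂μ) :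
    ‖B‖ ^ p.toReal ≤ ‖g‖ := by
  have hp0 : p ≠ 0 := (zero_lt_one.trans_le Fact.out).ne'
  have hP : 0 < p.toReal := ENNReal.toReal_pos hp0 hp
  have hbound : ∀ f, ‖B f‖ ^ p.toReal ≤ ‖g‖ * ‖f‖ ^ p.toReal := by
    intro f
    refine (ENNReal.ofReal_le_ofReal_iff (by positivity)).1 ?_
    calc ENNReal.ofReal (‖B f‖ ^ p.toReal)
        = ∫⁻ x, ENNReal.ofReal (g x) * ‖f x‖ₑ ^ p.toReal ∂μ := by
          rw [← hB, Lp.lintegral_rpow_enorm_eq_ofReal hp0 hp]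
      _ ≤ ∫⁻ x, ENNReal.ofReal ‖g‖ * ‖f x‖ₑ ^ p.toReal ∂μ := by
          gcongr with x
          exact (Real.le_norm_self _).trans (g.norm_coe_le_norm x)
      _ = ENNReal.ofReal (‖g‖ * ‖f‖ ^ p.toReal) := by
          rw [lintegral_const_mul' _ _ ENNReal.ofReal_ne_top,
            Lp.lintegral_rpow_enorm_eq_ofReal hp0 hp, ENNReal.ofReal_mul (norm_nonneg _)]
  have hB' : ‖B‖ ≤ ‖g‖ ^ p.toReal⁻¹ := by
    refine B.opNorm_le_bound (by positivity) fun f => ?_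
    rw [← Real.rpow_le_rpow_iff (by positivity) (by positivity) hP, Real.mul_rpow (by positivity)
      (by positivity), Real.rpow_inv_rpow (norm_nonneg _) hP.ne']
    exact hbound f
  calc ‖B‖ ^ p.toReal ≤ (‖g‖ ^ p.toReal⁻¹) ^ p.toReal := by gcongr
    _ = ‖g‖ := Real.rpow_inv_rpow (norm_nonneg _) hP.ne'

lemma norm_le_opNorm_rpow_of_lintegral_rpow_eq [OpensMeasurableSpace X] [IsFiniteMeasure μ]
    [μ.IsOpenPosMeasure] [Nontrivial E] (hp : p ≠ ∞) (hg : ∀ x, 0 ≤ g x)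
    (hB : ∀ f, ∫⁻ x, ‖B f x‖ₑ ^ p.toReal ∂μ = ∫⁻ x, ENNReal.ofReal (g x) * ‖f x‖ₑ ^ p.toReal ∂μ) :
    ‖g‖ ≤ ‖B‖ ^ p.toReal := by
  have hp0 : p ≠ 0 := (zero_lt_one.trans_le Fact.out).ne'
  have hP : 0 < p.toReal := ENNReal.toReal_pos hp0 hp
  refine le_of_forall_lt_imp_le_of_dense fun t ht => ?_
  rcases lt_or_ge t 0 with ht0 | ht0
  · exact ht0.le.trans (by positivity)
  set s := {x | t < g x}
  have hs : IsOpen s := isOpen_lt continuous_const g.continuous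
  have hsne : s.Nonempty := by
    by_contra! hempty
    refine ht.not_ge ((g.norm_le ht0).2 fun x => ?_)
    rw [Real.norm_of_nonneg (hg x)]
    exact not_lt.1 fun hx => hempty.subset hx
  obtain ⟨c, hc⟩ := exists_ne (0 : E)
  set f := indicatorConstLp p hs.measurableSet (measure_ne_top μ s) c
  have hf : 0 < ‖f‖ := by
    rw [norm_indicatorConstLp hp0 hp]
    exact mul_pos (norm_pos_iff.2 hc) (Real.rpow_pos_of_pos
      (ENNReal.toReal_pos (hs.measure_ne_zero μ hsne) (measure_ne_top μ s)) _)
  have hlow : t * ‖f‖ ^ p.toReal ≤ ‖B f‖ ^ p.toReal := by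
    refine (ENNReal.ofReal_le_ofReal_iff (by positivity)).1 ?_
    rw [← Lp.lintegral_rpow_enorm_eq_ofReal hp0 hp, hB, ENNReal.ofReal_mul ht0,
      ← Lp.lintegral_rpow_enorm_eq_ofReal hp0 hp, ← lintegral_const_mul' _ _ ENNReal.ofReal_ne_top]
    refine lintegral_mono_ae ?_
    filter_upwards [indicatorConstLp_coeFn (p := p) (hs := hs.measurableSet)
      (hμs := measure_ne_top μ s) (c := c)] with x hx
    by_cases hxs : x ∈ s
    · gcongr
      exact hxs.le
    · rw [hx, Set.indicator_of_notMem hxs]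
      simp [ENNReal.zero_rpow_of_pos hP]
  have hupp : ‖B f‖ ^ p.toReal ≤ ‖B‖ ^ p.toReal * ‖f‖ ^ p.toReal := by
    rw [← Real.mul_rpow (norm_nonneg _) (norm_nonneg _)]
    exact Real.rpow_le_rpow (norm_nonneg _) (B.le_opNorm f) hP.le
  exact le_of_mul_le_mul_right (hlow.trans hupp) (by positivity)

lemma opNorm_eq_of_lintegral_rpow_eq [OpensMeasurableSpace X] [IsFiniteMeasure μ]
    [μ.IsOpenPosMeasure] [Nontrivial E] (hp : p ≠ ∞) (hg : ∀ x, 0 ≤ g x)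
    (hB : ∀ f, ∫⁻ x, ‖B f x‖ₑ ^ p.toReal ∂μ = ∫⁻ x, ENNReal.ofReal (g x) * ‖f x‖ₑ ^ p.toReal ∂μ) :
    ‖B‖ = ‖g‖ ^ (1 / p.toReal) := by
  have hP : p.toReal ≠ 0 := (ENNReal.toReal_pos (zero_lt_one.trans_le Fact.out).ne' hp).ne'
  rw [← le_antisymm (opNorm_rpow_le_of_lintegral_rpow_eq hp hB)
    (norm_le_opNorm_rpow_of_lintegral_rpow_eq hp hg hB), one_div,
    Real.rpow_rpow_inv (norm_nonneg _) hP]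

end LpNorm

lemma spectralRadius_eq_rpow_of_norm_pow_eq {A B : Type*} [NormedRing A] [NormedAlgebra ℂ A]
    [CompleteSpace A] [NormedRing B] [NormedAlgebra ℂ B] [CompleteSpace B] {a : A} {b : B}
    {r : ℝ} (hr : 0 ≤ r) (h : ∀ k : ℕ, ‖a ^ k‖ = ‖b ^ k‖ ^ r) :
    spectralRadius ℂ a = spectralRadius ℂ b ^ r := by
  have hk : ∀ k : ℕ,
      (‖a ^ k‖₊ : ℝ≥0∞) ^ (1 / k : ℝ) = ((‖b ^ k‖₊ : ℝ≥0∞) ^ (1 / k : ℝ)) ^ r := by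
    intro k
    rw [← ENNReal.rpow_mul, mul_comm, ENNReal.rpow_mul, ← enorm_eq_nnnorm, ← enorm_eq_nnnorm,
      ← ofReal_norm, ← ofReal_norm, ENNReal.ofReal_rpow_of_nonneg (norm_nonneg _) hr, h]
  refine tendsto_nhds_unique (spectrum.pow_nnnorm_pow_one_div_tendsto_nhds_spectralRadius a) ?_
  simp_rw [hk]
  exact (ENNReal.continuous_rpow_const.tendsto _).comp
    (spectrum.pow_nnnorm_pow_one_div_tendsto_nhds_spectralRadius b)

namespace BernoulliShift

variable {n : ℕ}

def transferReal (n : ℕ) (w g : C(BSpace n, ℝ)) : C(BSpace n, ℝ) :=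
  ⟨fun y => ∑ i : Fin n, w (cons n i y) * g (cons n i y),
    continuous_finsetSum _ fun i _ =>
      (w.continuous.comp (cons_continuous n i)).mul (g.continuous.comp (cons_continuous n i))⟩

@[simp]
lemma transferReal_apply (w g : C(BSpace n, ℝ)) (y : BSpace n) :
    transferReal n w g y = ∑ i : Fin n, w (cons n i y) * g (cons n i y) := rfl

@[simp]
lemma transfer_apply (w : C(BSpace n, ℝ)) (b : C(BSpace n, ℂ)) (y : BSpace n) :
    transfer n w b y = ∑ i : Fin n, (w (cons n i y) : ℂ) * b (cons n i y) := rfl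

@[simp]
lemma shift_cons (i : Fin n) (y : BSpace n) : shift n (cons n i y) = y := rfl

lemma transferReal_nonneg {w g : C(BSpace n, ℝ)} (hw : ∀ x, 0 ≤ w x) (hg : ∀ x, 0 ≤ g x)
    (y : BSpace n) : 0 ≤ transferReal n w g y := by
  rw [transferReal_apply]
  exact Finset.sum_nonneg fun i _ => mul_nonneg (hw _) (hg _)

lemma transferReal_iterate_nonneg {w : C(BSpace n, ℝ)} (hw : ∀ x, 0 ≤ w x) (k : ℕ)
    (y : BSpace n) : 0 ≤ (transferReal n w)^[k] 1 y := by
  induction k generalizing y with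
  | zero => exact zero_le_one
  | succ k ih =>
    rw [Function.iterate_succ_apply']
    exact transferReal_nonneg hw ih y

lemma transferReal_mul (w v g : C(BSpace n, ℝ)) :
    transferReal n w (v * g) = transferReal n (w * v) g := by
  ext y
  simp [mul_assoc]

lemma transferReal_mul_comp_shift (w G F : C(BSpace n, ℝ)) :
    transferReal n w (G * F.comp (shiftCM n)) = transferReal n w G * F := by
  ext y
  simp [shiftCM, Finset.sum_mul, mul_assoc]

lemma transfer_ofRealCM (w g : C(BSpace n, ℝ)) :
    transfer n w (ofRealCM g) = ofRealCM (transferReal n w g) := by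
  ext y
  simp

lemma transfer_iterate_ofRealCM (w g : C(BSpace n, ℝ)) (k : ℕ) :
    (transfer n w)^[k] (ofRealCM g) = ofRealCM ((transferReal n w)^[k] g) := by
  have hsemi : Function.Semiconj ofRealCM (transferReal n w) (transfer n w) :=
    fun g => (transfer_ofRealCM w g).symm
  exact (hsemi.iterate_right k g).symm

lemma norm_transfer_iterate_apply_le {w : C(BSpace n, ℝ)} (hw : ∀ x, 0 ≤ w x) (k : ℕ)
    (b : C(BSpace n, ℂ)) (y : BSpace n) :
    ‖(transfer n w)^[k] b y‖ ≤ (transferReal n w)^[k] 1 y * ‖b‖ := by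
  induction k generalizing y with
  | zero => simpa using b.norm_coe_le_norm y
  | succ k ih =>
    simp only [Function.iterate_succ_apply', transfer_apply, transferReal_apply, Finset.sum_mul]
    refine (norm_sum_le _ _).trans (Finset.sum_le_sum fun i _ => ?_)
    rw [norm_mul, Complex.norm_real, Real.norm_of_nonneg (hw _), mul_assoc]
    exact mul_le_mul_of_nonneg_left (ih _) (hw _)

lemma norm_pow_eq_norm_transferReal_iterate {w : C(BSpace n, ℝ)} (hw : ∀ x, 0 ≤ w x)
    {T : C(BSpace n, ℂ) →L[ℂ] C(BSpace n, ℂ)} (hT : ⇑T = transfer n w) (k : ℕ) :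
    ‖T ^ k‖ = ‖(transferReal n w)^[k] 1‖ := by
  have hTk : ⇑(T ^ k) = (transfer n w)^[k] := by rw [FunLike.coe_pow_eq_iterate, hT]
  refine le_antisymm (ContinuousLinearMap.opNorm_le_bound _ (norm_nonneg _) fun b => ?_) ?_
  · refine (ContinuousMap.norm_le _ (by positivity)).2 fun y => ?_
    rw [hTk]
    refine (norm_transfer_iterate_apply_le hw k b y).trans ?_
    gcongr
    exact (Real.le_norm_self _).trans (ContinuousMap.norm_coe_le_norm _ y)
  · have h1 : (1 : C(BSpace n, ℂ)) = ofRealCM 1 := by ext; simp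
    calc ‖(transferReal n w)^[k] 1‖ = ‖(T ^ k) 1‖ := by
          rw [hTk, h1, transfer_iterate_ofRealCM, norm_ofRealCM]
      _ ≤ ‖T ^ k‖ :=
          (T ^ k).unit_le_opNorm 1 ((ContinuousMap.norm_le _ zero_le_one).2 fun _ => by simp)

section InvariantMeasure

variable {ϱ : C(BSpace n, ℝ)} {μ : Measure (BSpace n)}
  (hμ : ∀ a : C(BSpace n, ℂ), ∫ y, transfer n ϱ a y ∂μ = ∫ y, a y ∂μ)
include hμ

lemma integral_transferReal (g : C(BSpace n, ℝ)) :
    ∫ y, transferReal n ϱ g y ∂μ = ∫ y, g y ∂μ := by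
  have h := hμ (ofRealCM g)
  simp only [transfer_ofRealCM, ofRealCM_apply] at h
  exact_mod_cast h

lemma integral_mul_comp_shift (G F : C(BSpace n, ℝ)) :
    ∫ x, G x * F (shift n x) ∂μ = ∫ y, transferReal n ϱ G y * F y ∂μ := by
  have h := integral_transferReal hμ (G * F.comp (shiftCM n))
  rw [transferReal_mul_comp_shift] at h
  exact h.symm

lemma map_shift_withDensity [IsFiniteMeasure μ] (hϱ : ∀ x, 0 ≤ ϱ x) {G : C(BSpace n, ℝ)}
    (hG : ∀ x, 0 ≤ G x) :
    (μ.withDensity fun x => ENNReal.ofReal (G x)).map (shift n)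
      = μ.withDensity fun y => ENNReal.ofReal (transferReal n ϱ G y) := by
  have hLG := transferReal_nonneg hϱ hG
  have : IsFiniteMeasure (μ.withDensity fun x => ENNReal.ofReal (G x)) :=
    isFiniteMeasure_withDensity_ofReal (ContinuousMap.integrable μ G).2
  refine ext_of_forall_lintegral_eq_of_IsFiniteMeasure fun f => ?_
  let F : C(BSpace n, ℝ) := ⟨fun y => f y, by fun_prop⟩
  have hF : ∀ y, 0 ≤ F y := fun y => (f y).coe_nonneg
  have hf : Measurable fun y => (f y : ℝ≥0∞) := by fun_prop
  rw [lintegral_map hf (shift_continuous n).measurable,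
    lintegral_withDensity_eq_lintegral_mul _ (by fun_prop)
      (g := fun x => (f (shift n x) : ℝ≥0∞)) (hf.comp (shift_continuous n).measurable),
    lintegral_withDensity_eq_lintegral_mul _ (by fun_prop) hf]
  calc ∫⁻ x, ENNReal.ofReal (G x) * f (shift n x) ∂μ
      = ∫⁻ x, ENNReal.ofReal ((G * F.comp (shiftCM n)) x) ∂μ := by
        refine lintegral_congr fun x => ?_
        simp [ENNReal.ofReal_mul (hG x), F, shiftCM]
    _ = ENNReal.ofReal (∫ x, (G * F.comp (shiftCM n)) x ∂μ) :=
        ContinuousMap.lintegral_ofReal μ fun x => mul_nonneg (hG x) (hF _)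
    _ = ENNReal.ofReal (∫ y, (transferReal n ϱ G * F) y ∂μ) :=
        congrArg ENNReal.ofReal (integral_mul_comp_shift hμ G F)
    _ = ∫⁻ y, ENNReal.ofReal ((transferReal n ϱ G * F) y) ∂μ :=
        (ContinuousMap.lintegral_ofReal μ fun y => mul_nonneg (hLG y) (hF y)).symm
    _ = ∫⁻ y, ENNReal.ofReal (transferReal n ϱ G y) * f y ∂μ := by
        refine lintegral_congr fun y => ?_
        rw [ContinuousMap.mul_apply, ENNReal.ofReal_mul (hLG y)]
        simp [F]

lemma lintegral_mul_comp_shift [IsFiniteMeasure μ] (hϱ : ∀ x, 0 ≤ ϱ x) {G : C(BSpace n, ℝ)}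
    (hG : ∀ x, 0 ≤ G x) {h : BSpace n → ℝ≥0∞} (hh : Measurable h) :
    ∫⁻ x, ENNReal.ofReal (G x) * h (shift n x) ∂μ
      = ∫⁻ y, ENNReal.ofReal (transferReal n ϱ G y) * h y ∂μ := by
  have e1 := lintegral_withDensity_eq_lintegral_mul μ (by fun_prop : Measurable fun x =>
    ENNReal.ofReal (G x)) (hh.comp (shift_continuous n).measurable)
  have e2 := lintegral_withDensity_eq_lintegral_mul μ (by fun_prop : Measurable fun x =>
    ENNReal.ofReal (transferReal n ϱ G x)) hh
  simp only [Pi.mul_apply, Function.comp_apply] at e1 e2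
  rw [← e1, ← e2, ← lintegral_map hh (shift_continuous n).measurable,
    map_shift_withDensity hμ hϱ hG]

end InvariantMeasure

lemma cylinder_succ (x : BSpace n) (N : ℕ) :
    PiNat.cylinder x (N + 1) = {z | z 0 = x 0} ∩ shift n ⁻¹' PiNat.cylinder (shift n x) N := by
  ext z
  simp only [PiNat.mem_cylinder_iff, Nat.forall_lt_succ_left, Set.mem_inter_iff,
    Set.mem_preimage, Set.mem_ofPred_eq]
  rfl

section FullSupport

variable {ϱ : C(BSpace n, ℝ)} {μ : Measure (BSpace n)} [IsFiniteMeasure μ]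
  (hμ : ∀ a : C(BSpace n, ℂ), ∫ y, transfer n ϱ a y ∂μ = ∫ y, a y ∂μ) (hϱ : ∀ x, 0 < ϱ x)
include hμ hϱ

lemma measure_cylinder_pos [NeZero μ] (x : BSpace n) (N : ℕ) :
    0 < μ (PiNat.cylinder x N) := by
  induction N generalizing x with
  | zero => simpa using NeZero.ne μ
  | succ N ih =>
    set C := PiNat.cylinder (shift n x) N
    have hC : MeasurableSet C := (PiNat.isOpen_cylinder _ (shift n x) N).measurableSet
    have hX₀ : IsClopen {z : BSpace n | z 0 = x 0} := isClopen_cyl n (x 0)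
    let G : C(BSpace n, ℝ) :=
      ⟨{z | z 0 = x 0}.indicator 1, hX₀.continuous_indicator continuous_const⟩
    have hG : ∀ z, 0 ≤ G z := Set.indicator_nonneg fun _ _ => zero_le_one
    have hLG : ∀ y, transferReal n ϱ G y = ϱ (cons n (x 0) y) := by
      intro y
      rw [transferReal_apply, Finset.sum_eq_single (x 0) (fun j _ hj => by simp [G, cons, hj])
        (by simp)]
      simp [G, Set.indicator_of_mem (show cons n (x 0) y ∈ {z : BSpace n | z 0 = x 0} from rfl)]
    have hpos : 0 < ∫⁻ y, ENNReal.ofReal (transferReal n ϱ G y) * C.indicator 1 y ∂μ := by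
      refine (lintegral_pos_iff_support (by fun_prop)).2
        ((ih (shift n x)).trans_le (measure_mono fun y hy => ?_))
      have hyC : y ∈ C := hy
      simp [hLG, hϱ, hyC]
    rw [← lintegral_mul_comp_shift hμ (fun x => (hϱ x).le) hG (measurable_one.indicator hC)]
      at hpos
    refine hpos.trans_eq ?_
    rw [cylinder_succ, ← lintegral_indicator_one
      (hX₀.isClosed.measurableSet.inter (hC.preimage (shift_continuous n).measurable))]
    congr 1
    funext z
    by_cases h0 : z 0 = x 0 <;> by_cases h1 : shift n z ∈ C <;> simp [G, h0, h1]

lemma isOpenPosMeasure [NeZero μ] : μ.IsOpenPosMeasure := by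
  refine ⟨fun U hU ⟨x, hx⟩ => ?_⟩
  obtain ⟨_, ⟨y, N, rfl⟩, hxC, hCU⟩ :=
    (PiNat.isTopologicalBasis_cylinders _).exists_subset_of_mem_open hx hU
  rw [← PiNat.mem_cylinder_iff_eq.1 hxC] at hCU
  exact ((measure_cylinder_pos hμ hϱ x N).trans_le (measure_mono hCU)).ne'

end FullSupport

lemma lintegral_rpow_enorm_pow_apply {ϱ : C(BSpace n, ℝ)} {μ : Measure (BSpace n)}
    [IsFiniteMeasure μ] (hμ : ∀ a : C(BSpace n, ℂ), ∫ y, transfer n ϱ a y ∂μ = ∫ y, a y ∂μ)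
    (hϱ : ∀ x, 0 ≤ ϱ x) {p : ℝ≥0∞} [Fact (1 ≤ p)] {a : C(BSpace n, ℂ)} {v : C(BSpace n, ℝ)}
    (hv : ∀ x, v x = ‖a x‖ ^ p.toReal) {A : Lp ℂ p μ →L[ℂ] Lp ℂ p μ}
    (hA : ∀ f : Lp ℂ p μ, A f =ᵐ[μ] fun x => a x * f (shift n x)) (k : ℕ) (f : Lp ℂ p μ) :
    ∫⁻ x, ‖(A ^ k) f x‖ₑ ^ p.toReal ∂μ
      = ∫⁻ x, ENNReal.ofReal ((transferReal n (ϱ * v))^[k] 1 x) * ‖f x‖ₑ ^ p.toReal ∂μ := by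
  have hv0 : ∀ x, 0 ≤ v x := fun x => (hv x).symm ▸ by positivity
  have hgk := transferReal_iterate_nonneg (w := ϱ * v) fun x => mul_nonneg (hϱ x) (hv0 x)
  induction k generalizing f with
  | zero => simp
  | succ k ih =>
    rw [pow_succ, mul_apply_eq_comp, ih, Function.iterate_succ_apply',
      ← transferReal_mul, ← lintegral_mul_comp_shift hμ hϱ
        (fun x => mul_nonneg (hv0 x) (hgk k x))
        ((Lp.stronglyMeasurable f).measurable.enorm.pow_const _)]
    refine lintegral_congr_ae ?_
    filter_upwards [hA f] with x hx
    rw [hx, enorm_mul, ENNReal.mul_rpow_of_nonneg _ _ ENNReal.toReal_nonneg,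
      ContinuousMap.mul_apply, ENNReal.ofReal_mul (hv0 x), hv,
      ← ENNReal.ofReal_rpow_of_nonneg (norm_nonneg _) ENNReal.toReal_nonneg, ofReal_norm]
    ring

end BernoulliShift

open BernoulliShift

theorem stmt_16_general (n : ℕ)
    (ϱ : C(BSpace n, ℝ)) (hϱpos : ∀ x, 0 < ϱ x)
    (μ : Measure (BSpace n)) [IsProbabilityMeasure μ]
    (hμ : ∀ a : C(BSpace n, ℂ), ∫ y, transfer n ϱ a y ∂μ = ∫ y, a y ∂μ)
    (p : ℝ≥0∞) [Fact (1 ≤ p)] (hp : p ≠ ∞)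
    (a : C(BSpace n, ℂ))
    (A : Lp ℂ p μ →L[ℂ] Lp ℂ p μ)
    (hA : ∀ f : Lp ℂ p μ, (A f : BSpace n → ℂ) =ᵐ[μ] fun x => a x * f (shift n x))
    (LW : C(BSpace n, ℂ) →L[ℂ] C(BSpace n, ℂ))
    (hLW : ∀ (b : C(BSpace n, ℂ)) (y : BSpace n),
      LW b y = ∑ i : Fin n,
        (ϱ (cons n i y) : ℂ) * ((‖a (cons n i y)‖ ^ p.toReal : ℝ) : ℂ) * b (cons n i y)) :
    spectralRadius ℂ A = spectralRadius ℂ LW ^ (1 / p.toReal) := by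
  let v : C(BSpace n, ℝ) := ⟨fun x => ‖a x‖ ^ p.toReal,
    a.continuous.norm.rpow_const fun _ => Or.inr ENNReal.toReal_nonneg⟩
  have hw : ∀ x, 0 ≤ (ϱ * v) x := fun x =>
    mul_nonneg (hϱpos x).le (Real.rpow_nonneg (norm_nonneg _) _)
  have hLW' : ⇑LW = transfer n (ϱ * v) := by
    ext b y
    rw [hLW, transfer_apply]
    refine Finset.sum_congr rfl fun i _ => ?_
    simp [v, mul_assoc]
  have := isOpenPosMeasure hμ hϱpos
  refine spectralRadius_eq_rpow_of_norm_pow_eq (a := A) (b := LW) (by positivity) fun k => ?_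
  rw [norm_pow_eq_norm_transferReal_iterate hw hLW' k]
  exact opNorm_eq_of_lintegral_rpow_eq hp (transferReal_iterate_nonneg hw k)
    (lintegral_rpow_enorm_pow_apply hμ (fun x => (hϱpos x).le) (fun _ => rfl) hA k)

/-- For every `a ∈ C(X)`, the spectral radius of the weighted composition
operator `π(a)T_φ : f ↦ a·(f∘φ)` on `L^p_μ(X)` is given by
`r(π(a)T_φ) = r_{B(C(X))}(L_{|a|^p})^{1/p}`, where `L_{|a|^p}(b) = L(|a|^p·b)` is the weighted
transfer operator on `C(X)` with the supremum norm. -/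
theorem stmt_16 (n : ℕ) (hn : 2 ≤ n)
    (ϱ : C(BSpace n, ℝ)) (hϱpos : ∀ x, 0 < ϱ x)
    (hϱsum : ∀ y : BSpace n, ∑ i : Fin n, ϱ (cons n i y) = 1)
    (μ : Measure (BSpace n)) [IsProbabilityMeasure μ]
    (hμ : ∀ a : C(BSpace n, ℂ), ∫ y, transfer n ϱ a y ∂μ = ∫ y, a y ∂μ)
    (p : ℝ≥0∞) [Fact (1 ≤ p)] (hp : p ≠ ∞)
    (a : C(BSpace n, ℂ))
    (A : Lp ℂ p μ →L[ℂ] Lp ℂ p μ)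
    (hA : ∀ f : Lp ℂ p μ, (A f : BSpace n → ℂ) =ᵐ[μ] fun x => a x * f (shift n x))
    (LW : C(BSpace n, ℂ) →L[ℂ] C(BSpace n, ℂ))
    (hLW : ∀ (b : C(BSpace n, ℂ)) (y : BSpace n),
      LW b y = ∑ i : Fin n,
        (ϱ (cons n i y) : ℂ) * ((‖a (cons n i y)‖ ^ p.toReal : ℝ) : ℂ) * b (cons n i y)) :
    spectralRadius ℂ A = spectralRadius ℂ LW ^ (1 / p.toReal) :=
  stmt_16_general n ϱ hϱpos μ hμ p hp a A hA LW hLW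

end
end
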